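/- arXiv:1602.07033 — 6 statements merged into one kernel-verified Lean document; each statement's English description precedes it below -/
import Mathlib

section
/- Assume the necessary condition ∫_0^x̄ (q(x)/g(x))·exp(−∫_0^x μ(s)/g(s) ds) dx = 1 holds. Define u_*(x) = (1/g(x))·exp(−∫_0^x μ(s)/g(s) ds) for x ∈ [0, x̄]. Then u_* is a strictly positive stationary solution of the Sinko–Streifer model on [0, x̄]: u_* is continuous and strictly positive on [0, x̄], the function x ↦ g(x)·u_*(x) is differentiable on [0, x̄] with (g·u_*)'(x) + μ(x)·u_*(x) = 0 for all x ∈ [0, x̄], and g(0)·u_*(0) = ∫_0^x̄ q(y)·u_*(y) dy. -/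
open MeasureTheory intervalIntegral

/-!
Writing `E x = exp (-∫₀ˣ μ/g)`, we have `g · u_* = E` on `[0, x̄]`. By the fundamental theorem
of calculus for the continuous integrand `μ/g`, `E' = -(μ/g) · E = -μ · u_*`, and
`g(0) u_*(0) = E 0 = 1`, which is the assumed normalisation `∫₀^x̄ q u_* = 1`.
-/

theorem ContinuousOn.hasDerivWithinAt_integral_Icc {E : Type*} [NormedAddCommGroup E]
    [NormedSpace ℝ E] [CompleteSpace E] {f : ℝ → E} {a b x : ℝ}
    (hf : ContinuousOn f (Set.Icc a b)) (hx : x ∈ Set.Icc a b) :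
    HasDerivWithinAt (fun u => ∫ t in a..u, f t) (f x) (Set.Icc a b) x := by
  have : Fact (x ∈ Set.Icc a b) := ⟨hx⟩
  have hint : IntervalIntegrable f volume a x :=
    (hf.mono (Set.uIcc_subset_Icc (Set.left_mem_Icc.2 (hx.1.trans hx.2)) hx)).intervalIntegrable
  exact integral_hasDerivWithinAt_right hint
    (hf.stronglyMeasurableAtFilter_nhdsWithin measurableSet_Icc x) (hf x hx)

theorem ContinuousOn.hasDerivWithinAt_exp_neg_integral_Icc {f : ℝ → ℝ} {a b x : ℝ}
    (hf : ContinuousOn f (Set.Icc a b)) (hx : x ∈ Set.Icc a b) :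
    HasDerivWithinAt (fun y => Real.exp (-∫ s in a..y, f s))
      (-(f x * Real.exp (-∫ s in a..x, f s))) (Set.Icc a b) x :=
  (hf.hasDerivWithinAt_integral_Icc hx).neg.exp.congr_deriv
    (by simp only [Pi.neg_apply, mul_comm, neg_mul])

theorem sinko_streifer_stationary_solution_exists_general
    (xbar : ℝ) (hxbar : 0 < xbar) (g μ q : ℝ → ℝ)
    (hg : ContinuousOn g (Set.Icc 0 xbar))
    (hμ : ContinuousOn μ (Set.Icc 0 xbar))
    (hgpos : ∀ x ∈ Set.Icc (0:ℝ) xbar, 0 < g x)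
    (hnec : (∫ x in (0:ℝ)..xbar,
        (q x / g x) * Real.exp (-(∫ s in (0:ℝ)..x, μ s / g s))) = 1)
    (u : ℝ → ℝ)
    (hu : ∀ x, u x = (1 / g x) * Real.exp (-(∫ s in (0:ℝ)..x, μ s / g s))) :
    ContinuousOn u (Set.Icc 0 xbar) ∧
    (∀ x ∈ Set.Icc (0:ℝ) xbar, 0 < u x) ∧
    (∀ x ∈ Set.Icc (0:ℝ) xbar,
      HasDerivWithinAt (fun y => g y * u y) (-(μ x * u x)) (Set.Icc 0 xbar) x) ∧
    g 0 * u 0 = ∫ y in (0:ℝ)..xbar, q y * u y := by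
  have hgne : ∀ x ∈ Set.Icc (0:ℝ) xbar, g x ≠ 0 := fun x hx => (hgpos x hx).ne'
  have hgu : ∀ x ∈ Set.Icc (0:ℝ) xbar,
      g x * u x = Real.exp (-∫ s in (0:ℝ)..x, μ s / g s) := fun x hx => by
    rw [hu x]
    field_simp [hgne x hx]
  have hgu_deriv : ∀ x ∈ Set.Icc (0:ℝ) xbar,
      HasDerivWithinAt (fun y => g y * u y) (-(μ x * u x)) (Set.Icc 0 xbar) x := fun x hx =>
    ((ContinuousOn.hasDerivWithinAt_exp_neg_integral_Icc (f := fun s => μ s / g s)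
      (hμ.div hg hgne) hx).congr hgu (hgu x hx)).congr_deriv
      (by rw [hu x]; ring)
  refine ⟨?_, fun x hx => ?_, hgu_deriv, ?_⟩
  · have hgu_cont : ContinuousOn (fun y => g y * u y) (Set.Icc 0 xbar) :=
      fun x hx => (hgu_deriv x hx).continuousWithinAt
    exact (hgu_cont.div hg hgne).congr fun x hx =>
      (mul_div_cancel_left₀ (u x) (hgne x hx)).symm
  · rw [hu x]
    exact mul_pos (one_div_pos.2 (hgpos x hx)) (Real.exp_pos _)
  · rw [hgu 0 ⟨le_rfl, hxbar.le⟩, integral_same, neg_zero, Real.exp_zero, ← hnec]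
    refine integral_congr fun y _ => ?_
    rw [hu y]
    ring

/-- If the necessary condition holds, then
`u_*(x) = (1/g(x)) * exp(-∫_0^x μ/g)` is a strictly positive stationary solution of
the Sinko–Streifer model on `[0, x̄]`. -/
theorem sinko_streifer_stationary_solution_exists
    (xbar : ℝ) (hxbar : 0 < xbar) (g μ q : ℝ → ℝ)
    (hg : ContinuousOn g (Set.Icc 0 xbar))
    (hμ : ContinuousOn μ (Set.Icc 0 xbar))
    (hq : ContinuousOn q (Set.Icc 0 xbar))
    (hgpos : ∀ x ∈ Set.Icc (0:ℝ) xbar, 0 < g x)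
    (hμnn : ∀ x ∈ Set.Icc (0:ℝ) xbar, 0 ≤ μ x)
    (hqnn : ∀ x ∈ Set.Icc (0:ℝ) xbar, 0 ≤ q x)
    (hnec : (∫ x in (0:ℝ)..xbar,
        (q x / g x) * Real.exp (-(∫ s in (0:ℝ)..x, μ s / g s))) = 1)
    (u : ℝ → ℝ)
    (hu : ∀ x, u x = (1 / g x) * Real.exp (-(∫ s in (0:ℝ)..x, μ s / g s))) :
    ContinuousOn u (Set.Icc 0 xbar) ∧
    (∀ x ∈ Set.Icc (0:ℝ) xbar, 0 < u x) ∧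
    (∀ x ∈ Set.Icc (0:ℝ) xbar,
      HasDerivWithinAt (fun y => g y * u y) (-(μ x * u x)) (Set.Icc 0 xbar) x) ∧
    g 0 * u 0 = ∫ y in (0:ℝ)..xbar, q y * u y :=
  sinko_streifer_stationary_solution_exists_general xbar hxbar g μ q hg hμ hgpos hnec u hu
end

section
/- Assume g(x_i) ≥ 0, q(x_i) ≥ 0, and q(x_i) < μ(x_i) for all i ∈ {1, …, n}. Then every complex eigenvalue of G_n has strictly negative real part. -/
/-!
`G_n` is a Metzler matrix (its off-diagonal entries are nonnegative) whose `k`-th column sums to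
`q(x_k) - μ(x_k)`, minus the outflow `g(x_k)/Δx` when `k = n`. For a Metzler matrix the
Gershgorin disc of a column reaches to the right exactly as far as the column sum, so every
column disc, and hence every eigenvalue, lies in the open left half-plane.
-/

open scoped BigOperators

/-- Grid points `x_i = i·Δx`, `i = 1, …, n` (0-based index `i : Fin n` corresponds to
the 1-based index `i+1`), where `Δx = x̄/n`. -/
noncomputable def gridX (xbar : ℝ) (n : ℕ) (i : Fin n) : ℝ := ((i : ℕ) + 1) * (xbar / n)

/-- The `n×n` Trotter–Kato (Galerkin) approximation `G_n` of the infinitesimal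
generator of the Sinko–Streifer model (eq. (12) of the paper). -/
noncomputable def sinkoG (xbar : ℝ) (n : ℕ) (g μ q : ℝ → ℝ) : Matrix (Fin n) (Fin n) ℝ :=
  fun i j =>
    let Δx := xbar / n
    let x := gridX xbar n
    if i = j then
      (if (i : ℕ) = 0 then -(g (x i)) / Δx - μ (x i) + q (x i)
       else -(g (x i)) / Δx - μ (x i))
    else if (i : ℕ) = 0 then q (x j)
    else if (i : ℕ) = (j : ℕ) + 1 then g (x j) / Δx
    else 0

open Finset

namespace Matrix

variable {n : Type*} [Fintype n] [DecidableEq n]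

@[simp]
theorem spectrum_transpose {R : Type*} [CommRing R] (A : Matrix n n R) :
    spectrum R Aᵀ = spectrum R A := by
  ext r
  rw [spectrum.mem_iff, spectrum.mem_iff, ← isUnit_transpose, transpose_sub,
    transpose_transpose, Algebra.algebraMap_eq_smul_one, transpose_smul, transpose_one]

theorem re_lt_zero_of_mem_spectrum_of_row_dominant (A : Matrix n n ℂ)
    (hA : ∀ k, (A k k).re + ∑ j ∈ univ.erase k, ‖A k j‖ < 0) {lam : ℂ}
    (hlam : lam ∈ spectrum ℂ A) : lam.re < 0 := by
  rw [← spectrum_toLin', ← Module.End.hasEigenvalue_iff_mem_spectrum] at hlam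
  obtain ⟨k, hk⟩ := eigenvalue_mem_ball hlam
  rw [Metric.mem_closedBall, dist_eq_norm] at hk
  calc lam.re = (A k k).re + (lam - A k k).re := by simp
    _ ≤ (A k k).re + ∑ j ∈ univ.erase k, ‖A k j‖ :=
      add_le_add_right ((Complex.re_le_norm _).trans hk) _
    _ < 0 := hA k

theorem re_lt_zero_of_mem_spectrum_of_col_dominant (A : Matrix n n ℂ)
    (hA : ∀ k, (A k k).re + ∑ i ∈ univ.erase k, ‖A i k‖ < 0) {lam : ℂ}
    (hlam : lam ∈ spectrum ℂ A) : lam.re < 0 :=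
  re_lt_zero_of_mem_spectrum_of_row_dominant Aᵀ hA (by rwa [spectrum_transpose])

theorem re_lt_zero_of_mem_spectrum_of_metzler (A : Matrix n n ℝ)
    (hoff : ∀ i j, i ≠ j → 0 ≤ A i j) (hcol : ∀ j, ∑ i, A i j < 0) {lam : ℂ}
    (hlam : lam ∈ spectrum ℂ (A.map Complex.ofReal)) : lam.re < 0 := by
  refine re_lt_zero_of_mem_spectrum_of_col_dominant _ (fun k => ?_) hlam
  have hnorm : ∑ i ∈ univ.erase k, ‖A.map Complex.ofReal i k‖ = ∑ i ∈ univ.erase k, A i k :=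
    sum_congr rfl fun i hi => by
      rw [map_apply, Complex.norm_real, Real.norm_of_nonneg (hoff i k (ne_of_mem_erase hi))]
  rw [hnorm, map_apply, Complex.ofReal_re, add_sum_erase _ (fun i => A i k) (mem_univ k)]
  exact hcol k

end Matrix

section SinkoStreifer

variable {xbar : ℝ} {n : ℕ} {g μ q : ℝ → ℝ}

theorem sinkoG_nonneg_of_ne (hxbar : 0 ≤ xbar) (hg : ∀ i, 0 ≤ g (gridX xbar n i))
    (hq : ∀ i, 0 ≤ q (gridX xbar n i)) {i j : Fin n} (hij : i ≠ j) :
    0 ≤ sinkoG xbar n g μ q i j := by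
  have hΔx : 0 ≤ xbar / n := div_nonneg hxbar n.cast_nonneg
  simp only [sinkoG, if_neg hij]
  split_ifs
  exacts [hq j, div_nonneg (hg j) hΔx, le_rfl]

theorem sinkoG_apply_col (i k : Fin n) :
    sinkoG xbar n g μ q i k =
      (if (i : ℕ) = 0 then q (gridX xbar n k) else 0) +
      (if (i : ℕ) = k then -(g (gridX xbar n k)) / (xbar / n) - μ (gridX xbar n k) else 0) +
      (if (i : ℕ) = k + 1 then g (gridX xbar n k) / (xbar / n) else 0) := by
  simp only [sinkoG, Fin.val_inj]
  split_ifs <;> first | omega | (subst_vars; ring)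

theorem sum_sinkoG_col_le (hxbar : 0 ≤ xbar) (k : Fin n) (hgk : 0 ≤ g (gridX xbar n k)) :
    ∑ i, sinkoG xbar n g μ q i k ≤ q (gridX xbar n k) - μ (gridX xbar n k) := by
  have hflow : 0 ≤ g (gridX xbar n k) / (xbar / n) := div_nonneg hgk (by positivity)
  simp only [sinkoG_apply_col, sum_add_distrib]
  rw [Fin.sum_univ_eq_sum_range (fun m => if m = 0 then _ else 0),
    Fin.sum_univ_eq_sum_range (fun m => if m = k.val then _ else 0),
    Fin.sum_univ_eq_sum_range (fun m => if m = k.val + 1 then _ else 0)]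
  simp only [sum_ite_eq', mem_range, k.pos, k.isLt, if_true, neg_div]
  split_ifs <;> linarith

end SinkoStreifer

open Matrix Module.End in
theorem sinkoG_eigenvalues_negative_general
    (xbar : ℝ) (hxbar : 0 < xbar) (n : ℕ) (g μ q : ℝ → ℝ)
    (hg : ∀ i : Fin n, 0 ≤ g (gridX xbar n i))
    (hq : ∀ i : Fin n, 0 ≤ q (gridX xbar n i))
    (hqμ : ∀ i : Fin n, q (gridX xbar n i) < μ (gridX xbar n i))
    (lam : ℂ)
    (hlam : lam ∈ spectrum ℂ ((sinkoG xbar n g μ q).map Complex.ofReal)) :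
    lam.re < 0 :=
  re_lt_zero_of_mem_spectrum_of_metzler _
    (fun _ _ => sinkoG_nonneg_of_ne hxbar.le hg hq)
    (fun k => (sum_sinkoG_col_le hxbar.le k (hg k)).trans_lt (sub_neg.mpr (hqμ k))) hlam

/-- If `q(x_i) < μ(x_i)` at every grid point, then every complex eigenvalue of the
approximate Sinko–Streifer generator `G_n` has strictly negative real part. -/
theorem sinkoG_eigenvalues_negative
    (xbar : ℝ) (hxbar : 0 < xbar) (n : ℕ) (hn : 1 ≤ n) (g μ q : ℝ → ℝ)
    (hg : ∀ i : Fin n, 0 ≤ g (gridX xbar n i))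
    (hq : ∀ i : Fin n, 0 ≤ q (gridX xbar n i))
    (hqμ : ∀ i : Fin n, q (gridX xbar n i) < μ (gridX xbar n i))
    (lam : ℂ)
    (hlam : lam ∈ spectrum ℂ ((sinkoG xbar n g μ q).map Complex.ofReal)) :
    lam.re < 0 :=
  sinkoG_eigenvalues_negative_general xbar hxbar n g μ q hg hq hqμ lam hlam
end

section
/- Assume α_i ≥ 0, g(x_i) ≥ 0, q(x_i) ≥ 0, k_f(x_i) ≥ 0, k_a(x_i, x_j) ≥ 0, and Γ(x_i, x_j) ≥ 0 for all i, j ∈ {1, …, n}. Then for every complex eigenvalue λ of J_F(α) there exists i ∈ {1, …, n} such that |λ − (J_F(α))_{i,i}| ≤ g(x_i)/Δx + q(x_i) + Σ_{j=1}^{i−1} Γ(x_j, x_i)·k_f(x_i)·Δx + Σ_{j=1}^{n−i} α_j·k_a(x_j, x_i)·Δx + Σ_{j=1, j≠i}^{n−i} α_j·k_a(x_i, x_j)·Δx. -/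
open scoped BigOperators

/-- The Jacobian `J_A(α)` of the discretized aggregation operator.  In 1-based
notation, `(J_A(α))_{i,j}` is the sum of `−α_i·k_a(x_i,x_j)·Δx` (if `i+j ≤ n`),
`−Σ_{m=1}^{n−i} k_a(x_i,x_m)·α_m·Δx` (if `i = j`), and
`α_{i−j}·k_a(x_j,x_{i−j})·Δx` (if `i > j`). -/
noncomputable def flocJA (xbar : ℝ) (n : ℕ) (ka : ℝ → ℝ → ℝ) (α : Fin n → ℝ) :
    Matrix (Fin n) (Fin n) ℝ :=
  fun i j =>
    let Δx := xbar / n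
    let x := gridX xbar n
    (if (i : ℕ) + (j : ℕ) + 2 ≤ n then -(α i) * ka (x i) (x j) * Δx else 0)
    + (if i = j then
        -(∑ m : Fin n, if (m : ℕ) + (i : ℕ) + 2 ≤ n then ka (x i) (x m) * α m * Δx else 0)
       else 0)
    + (if _h : (j : ℕ) < (i : ℕ) then
        α ⟨(i : ℕ) - (j : ℕ) - 1,
            Nat.lt_of_le_of_lt ((Nat.sub_le _ _).trans (Nat.sub_le _ _)) i.isLt⟩ *
          ka (x j)
            (x ⟨(i : ℕ) - (j : ℕ) - 1,
              Nat.lt_of_le_of_lt ((Nat.sub_le _ _).trans (Nat.sub_le _ _)) i.isLt⟩) * Δx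
       else 0)

/-- The Jacobian `J_B` of the discretized breakage operator:
`(J_B)_{i,i} = −k_f(x_i)/2`, `(J_B)_{i,j} = Γ(x_i,x_j)·k_f(x_j)·Δx` for `j > i`,
and `0` below the diagonal. -/
noncomputable def flocJB (xbar : ℝ) (n : ℕ) (kf : ℝ → ℝ) (Γ : ℝ → ℝ → ℝ) :
    Matrix (Fin n) (Fin n) ℝ :=
  fun i j =>
    let Δx := xbar / n
    let x := gridX xbar n
    if i = j then -(kf (x i)) / 2
    else if (i : ℕ) < (j : ℕ) then Γ (x i) (x j) * kf (x j) * Δx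
    else 0

/-- The approximate Jacobian `J_F(α) = G_n + J_A(α) + J_B` of the discretized
population balance (microbial flocculation) equation (eq. (23)). -/
noncomputable def flocJF (xbar : ℝ) (n : ℕ) (g μ q kf : ℝ → ℝ)
    (ka : ℝ → ℝ → ℝ) (Γ : ℝ → ℝ → ℝ) (α : Fin n → ℝ) : Matrix (Fin n) (Fin n) ℝ :=
  sinkoG xbar n g μ q + flocJA xbar n ka α + flocJB xbar n kf Γ

/-!
By Gershgorin's theorem for the transpose, some column `i` of `J_F(α)` has off-diagonal absolute
sum at least `|λ - (J_F(α))_{i,i}|`. That sum is at most the sum of the corresponding column sums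
of `G_n`, `J_A(α)` and `J_B`, which the sign assumptions make explicit: `G_n` contributes `q(x_i)`
(first row) and `g(x_i)/Δx` (subdiagonal), `J_B` its entries above the diagonal, and `J_A(α)` the
`α_j k_a(x_j, x_i)` terms plus its part below the diagonal, which the shift `m = j - i - 1` turns
into the `α_m k_a(x_i, x_m)` terms. The two sums share the term `α_i k_a(x_i, x_i) Δx`, counted
once, whence the restriction `j ≠ i` in one of them.
-/

open Finset

theorem Matrix.exists_norm_sub_diag_le_sum_col {K ι : Type*} [NormedField K] [Fintype ι]
    [DecidableEq ι] {A : Matrix ι ι K} {μ : K} (hμ : μ ∈ spectrum K A) :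
    ∃ k, ‖μ - A k k‖ ≤ ∑ i ∈ univ.erase k, ‖A i k‖ := by
  by_contra! h
  refine spectrum.mem_iff.1 hμ ?_
  rw [Matrix.isUnit_iff_isUnit_det, isUnit_iff_ne_zero]
  refine det_ne_zero_of_sum_col_lt_diag fun k => ?_
  have hoff : ∑ i ∈ univ.erase k, ‖(algebraMap K (Matrix ι ι K) μ - A) i k‖
      = ∑ i ∈ univ.erase k, ‖A i k‖ :=
    sum_congr rfl fun i hi => by simp [algebraMap_matrix_apply, ne_of_mem_erase hi]
  rw [hoff, sub_apply, algebraMap_matrix_apply, if_pos rfl, Algebra.algebraMap_self_apply]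
  exact h k

theorem sum_ite_apply_eq_le_of_injective {ι κ R : Type*} [Fintype ι] [DecidableEq κ]
    [Semiring R] [PartialOrder R] [IsOrderedRing R] {f : ι → κ} (hf : f.Injective)
    (k : κ) {c : R} (hc : 0 ≤ c) : ∑ i, (if f i = k then c else 0) ≤ c := by
  rw [sum_ite, sum_const_zero, add_zero, sum_const, nsmul_eq_mul]
  refine mul_le_of_le_one_left hc ?_
  have : #{i | f i = k} ≤ 1 := card_le_one.2 fun a ha b hb =>
    hf ((mem_filter.1 ha).2.trans (mem_filter.1 hb).2.symm)
  exact (Nat.mono_cast this).trans_eq Nat.cast_one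

theorem Fin.sum_dite_lt_eq_sum_ite_add_le {M : Type*} [AddCommMonoid M] {n : ℕ} (i : Fin n)
    (F : Fin n → M) :
    ∑ j : Fin n, (if h : (i : ℕ) < j then F ⟨j - i - 1, by omega⟩ else 0)
      = ∑ m : Fin n, if (m : ℕ) + i + 2 ≤ n then F m else 0 := by
  rw [sum_dite, sum_const_zero, add_zero, ← sum_filter]
  refine sum_bij' (fun j _ => ⟨j - i - 1, by omega⟩)
    (fun m hm => ⟨⟨m + i + 1, by grind⟩, by grind⟩)
    (fun j _ => by have := (mem_filter.1 j.2).2; grind) (fun _ _ => by simp)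
    (fun j _ => by have := (mem_filter.1 j.2).2; ext; simp; omega)
    (fun _ _ => by ext; simp; omega) (fun _ _ => rfl)

theorem sum_erase_ite_add_sum_ite {ι M : Type*} [Fintype ι] [DecidableEq ι] [AddCommMonoid M]
    (P : ι → Prop) [DecidablePred P] {f h : ι → M} {i : ι} (hi : f i = h i) :
    ∑ j ∈ univ.erase i, (if P j then f j else 0) + ∑ j, (if P j then h j else 0)
      = ∑ j, (if P j then f j else 0) + ∑ j, (if P j ∧ j ≠ i then h j else 0) := by
  rw [← add_sum_erase _ _ (mem_univ i), ← add_sum_erase _ _ (mem_univ i),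
    ← add_sum_erase univ (fun j => if P j ∧ j ≠ i then h j else 0) (mem_univ i), hi]
  have hoff : ∑ j ∈ univ.erase i, (if P j ∧ j ≠ i then h j else 0)
      = ∑ j ∈ univ.erase i, (if P j then h j else 0) :=
    sum_congr rfl fun j hj => by simp [ne_of_mem_erase hj]
  simp only [hoff, ne_eq, not_true_eq_false, and_false, if_false, zero_add]
  abel

section FlocColumns

variable {xbar : ℝ} {n : ℕ} (hxbar : 0 ≤ xbar) (i : Fin n)
include hxbar

theorem sinkoG_sum_abs_col_le (g μ q : ℝ → ℝ) (hg : 0 ≤ g (gridX xbar n i))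
    (hq : 0 ≤ q (gridX xbar n i)) :
    ∑ j ∈ univ.erase i, |sinkoG xbar n g μ q j i|
      ≤ g (gridX xbar n i) / (xbar / n) + q (gridX xbar n i) := by
  have hgΔ : 0 ≤ g (gridX xbar n i) / (xbar / n) := by positivity
  calc ∑ j ∈ univ.erase i, |sinkoG xbar n g μ q j i|
      ≤ ∑ j : Fin n, ((if (j : ℕ) = i + 1 then g (gridX xbar n i) / (xbar / n) else 0)
          + (if (j : ℕ) = 0 then q (gridX xbar n i) else 0)) := by
        refine (sum_le_sum fun j hj => ?_).trans <|
          sum_le_sum_of_subset_of_nonneg (erase_subset _ _) fun _ _ _ => by positivity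
        simp only [sinkoG, if_neg (ne_of_mem_erase hj)]
        split_ifs <;> simp_all [abs_of_nonneg]
    _ ≤ g (gridX xbar n i) / (xbar / n) + q (gridX xbar n i) := by
        rw [sum_add_distrib]
        exact add_le_add (sum_ite_apply_eq_le_of_injective Fin.val_injective _ hgΔ)
          (sum_ite_apply_eq_le_of_injective Fin.val_injective _ hq)

theorem flocJB_sum_abs_col (kf : ℝ → ℝ) (Γ : ℝ → ℝ → ℝ) (hkf : 0 ≤ kf (gridX xbar n i))
    (hΓ : ∀ j, 0 ≤ Γ (gridX xbar n j) (gridX xbar n i)) :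
    ∑ j ∈ univ.erase i, |flocJB xbar n kf Γ j i|
      = ∑ j : Fin n, if (j : ℕ) < i then
          Γ (gridX xbar n j) (gridX xbar n i) * kf (gridX xbar n i) * (xbar / n) else 0 := by
  refine (sum_congr rfl fun j hj => ?_).trans (sum_erase univ (by simp))
  simp only [flocJB, if_neg (ne_of_mem_erase hj)]
  split_ifs
  · exact abs_of_nonneg (mul_nonneg (mul_nonneg (hΓ j) hkf) (by positivity))
  · exact abs_zero

theorem flocJA_sum_abs_col_le (ka : ℝ → ℝ → ℝ) (α : Fin n → ℝ) (hα : ∀ j, 0 ≤ α j)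
    (hka : ∀ j k, 0 ≤ ka (gridX xbar n j) (gridX xbar n k)) :
    ∑ j ∈ univ.erase i, |flocJA xbar n ka α j i|
      ≤ (∑ j : Fin n, if (j : ℕ) + i + 2 ≤ n then
          α j * ka (gridX xbar n j) (gridX xbar n i) * (xbar / n) else 0)
        + ∑ j : Fin n, if (j : ℕ) + i + 2 ≤ n ∧ j ≠ i then
          α j * ka (gridX xbar n i) (gridX xbar n j) * (xbar / n) else 0 := by
  have hΔ : 0 ≤ xbar / n := by positivity
  let F : Fin n → ℝ := fun m => α m * ka (gridX xbar n i) (gridX xbar n m) * (xbar / n)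
  calc ∑ j ∈ univ.erase i, |flocJA xbar n ka α j i|
      ≤ ∑ j ∈ univ.erase i, ((if (j : ℕ) + i + 2 ≤ n then
            α j * ka (gridX xbar n j) (gridX xbar n i) * (xbar / n) else 0)
          + if h : (i : ℕ) < j then F ⟨j - i - 1, by omega⟩ else 0) := by
        refine sum_le_sum fun j hj => ?_
        simp only [flocJA, if_neg (ne_of_mem_erase hj), add_zero]
        refine (abs_add_le _ _).trans (add_le_add ?_ ?_)
        · split_ifs
          · rw [neg_mul, neg_mul, abs_neg]
            exact (abs_of_nonneg (mul_nonneg (mul_nonneg (hα j) (hka j i)) hΔ)).le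
          · exact abs_zero.le
        · split_ifs
          · exact (abs_of_nonneg (mul_nonneg (mul_nonneg (hα _) (hka i _)) hΔ)).le
          · exact abs_zero.le
    _ = (∑ j ∈ univ.erase i, if (j : ℕ) + i + 2 ≤ n then
            α j * ka (gridX xbar n j) (gridX xbar n i) * (xbar / n) else 0)
          + ∑ j : Fin n, if (j : ℕ) + i + 2 ≤ n then F j else 0 := by
        rw [sum_add_distrib, ← Fin.sum_dite_lt_eq_sum_ite_add_le]
        exact congrArg _ (sum_erase _ (by simp))
    _ = _ := sum_erase_ite_add_sum_ite _ rfl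

end FlocColumns

theorem flocJF_gershgorin_general
    (xbar : ℝ) (hxbar : 0 < xbar) (n : ℕ)
    (g μ q kf : ℝ → ℝ) (ka : ℝ → ℝ → ℝ) (Γ : ℝ → ℝ → ℝ) (α : Fin n → ℝ)
    (hα : ∀ i : Fin n, 0 ≤ α i)
    (hg : ∀ i : Fin n, 0 ≤ g (gridX xbar n i))
    (hq : ∀ i : Fin n, 0 ≤ q (gridX xbar n i))
    (hkf : ∀ i : Fin n, 0 ≤ kf (gridX xbar n i))
    (hka : ∀ i j : Fin n, 0 ≤ ka (gridX xbar n i) (gridX xbar n j))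
    (hΓ : ∀ i j : Fin n, 0 ≤ Γ (gridX xbar n i) (gridX xbar n j))
    (lam : ℂ)
    (hlam : lam ∈ spectrum ℂ
      ((flocJF xbar n g μ q kf ka Γ α).map Complex.ofReal)) :
    ∃ i : Fin n,
      ‖lam - ((flocJF xbar n g μ q kf ka Γ α i i : ℝ) : ℂ)‖
        ≤ g (gridX xbar n i) / (xbar / n) + q (gridX xbar n i)
          + (∑ j : Fin n, if (j : ℕ) < (i : ℕ) then
              Γ (gridX xbar n j) (gridX xbar n i) * kf (gridX xbar n i) * (xbar / n)
            else 0)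
          + (∑ j : Fin n, if (j : ℕ) + (i : ℕ) + 2 ≤ n then
              α j * ka (gridX xbar n j) (gridX xbar n i) * (xbar / n) else 0)
          + (∑ j : Fin n, if (j : ℕ) + (i : ℕ) + 2 ≤ n ∧ j ≠ i then
              α j * ka (gridX xbar n i) (gridX xbar n j) * (xbar / n) else 0) := by
  obtain ⟨i, hi⟩ := Matrix.exists_norm_sub_diag_le_sum_col hlam
  simp only [Matrix.map_apply, Complex.norm_real, Real.norm_eq_abs] at hi
  refine ⟨i, hi.trans ?_⟩
  have hsplit : ∑ j ∈ univ.erase i, |flocJF xbar n g μ q kf ka Γ α j i|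
      ≤ ∑ j ∈ univ.erase i, |sinkoG xbar n g μ q j i|
        + ∑ j ∈ univ.erase i, |flocJA xbar n ka α j i|
        + ∑ j ∈ univ.erase i, |flocJB xbar n kf Γ j i| := by
    rw [← sum_add_distrib, ← sum_add_distrib]
    exact sum_le_sum fun j _ => abs_add_three _ _ _
  have hG := sinkoG_sum_abs_col_le hxbar.le i g μ q (hg i) (hq i)
  have hA := flocJA_sum_abs_col_le hxbar.le i ka α hα hka
  have hB := flocJB_sum_abs_col hxbar.le i kf Γ (hkf i) (hΓ · i)
  linarith

/-- Gershgorin-type localization for the approximate Jacobian `J_F(α)` of the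
population balance equation: every complex eigenvalue `λ` of `J_F(α)` lies within
distance `R_i` of some diagonal entry `(J_F(α))_{i,i}`, where
`R_i = g(x_i)/Δx + q(x_i) + Σ_{j<i} Γ(x_j,x_i)k_f(x_i)Δx
  + Σ_{j=1}^{n−i} α_j k_a(x_j,x_i)Δx + Σ_{j=1,j≠i}^{n−i} α_j k_a(x_i,x_j)Δx`. -/
theorem flocJF_gershgorin
    (xbar : ℝ) (hxbar : 0 < xbar) (n : ℕ) (hn : 1 ≤ n)
    (g μ q kf : ℝ → ℝ) (ka : ℝ → ℝ → ℝ) (Γ : ℝ → ℝ → ℝ) (α : Fin n → ℝ)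
    (hα : ∀ i : Fin n, 0 ≤ α i)
    (hg : ∀ i : Fin n, 0 ≤ g (gridX xbar n i))
    (hq : ∀ i : Fin n, 0 ≤ q (gridX xbar n i))
    (hkf : ∀ i : Fin n, 0 ≤ kf (gridX xbar n i))
    (hka : ∀ i j : Fin n, 0 ≤ ka (gridX xbar n i) (gridX xbar n j))
    (hΓ : ∀ i j : Fin n, 0 ≤ Γ (gridX xbar n i) (gridX xbar n j))
    (lam : ℂ)
    (hlam : lam ∈ spectrum ℂ
      ((flocJF xbar n g μ q kf ka Γ α).map Complex.ofReal)) :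
    ∃ i : Fin n,
      ‖lam - ((flocJF xbar n g μ q kf ka Γ α i i : ℝ) : ℂ)‖
        ≤ g (gridX xbar n i) / (xbar / n) + q (gridX xbar n i)
          + (∑ j : Fin n, if (j : ℕ) < (i : ℕ) then
              Γ (gridX xbar n j) (gridX xbar n i) * kf (gridX xbar n i) * (xbar / n)
            else 0)
          + (∑ j : Fin n, if (j : ℕ) + (i : ℕ) + 2 ≤ n then
              α j * ka (gridX xbar n j) (gridX xbar n i) * (xbar / n) else 0)
          + (∑ j : Fin n, if (j : ℕ) + (i : ℕ) + 2 ≤ n ∧ j ≠ i then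
              α j * ka (gridX xbar n i) (gridX xbar n j) * (xbar / n) else 0) :=
  flocJF_gershgorin_general xbar hxbar n g μ q kf ka Γ α hα hg hq hkf hka hΓ lam hlam
end

section
/- Assume α_i ≥ 0, g(x_i) ≥ 0, q(x_i) ≥ 0, k_f(x_i) ≥ 0, k_a(x_i, x_j) ≥ 0, and Γ(x_i, x_j) ≥ 0 for all i, j ∈ {1, …, n}. If for every i ∈ {1, …, n} one has μ(x_i) + k_f(x_i)/2 > q(x_i) + Σ_{j=1}^{i−1} Γ(x_j, x_i)·k_f(x_i)·Δx + Σ_{j=1}^{n−i} α_j·k_a(x_j, x_i)·Δx, then every complex eigenvalue of J_F(α) has strictly negative real part. -/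
open scoped BigOperators

/-!
Column Gershgorin: the eigenvalues of `A` are those of `Aᵀ`, so each lies in a disc centred at some
`A k k` of radius `∑ i ≠ k, |A i k|`; hence `Re λ ≤ A k k + ∑ i ≠ k, |A i k|`. This column bound
is subadditive in `A`, so it can be estimated separately on the renewal, transport, aggregation
loss, aggregation gain and breakage parts of `J_F(α)`. The gain entries of column `k` add up
exactly to the aggregation loss rate on the diagonal (mass conservation of aggregation), so these
two cancel, and what remains is the dominance condition.
-/

open Finset

namespace Matrix

variable {ι : Type*} [Fintype ι] [DecidableEq ι]

theorem exists_mem_closedBall_sum_col_of_mem_spectrum {K : Type*} [NormedField K]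
    {A : Matrix ι ι K} {μ : K} (hμ : μ ∈ spectrum K A) :
    ∃ k, μ ∈ Metric.closedBall (A k k) (∑ i ∈ univ.erase k, ‖A i k‖) := by
  have hμT : μ ∈ spectrum K (Aᵀ).toLin' := by
    rwa [spectrum_toLin', mem_spectrum_iff_isRoot_charpoly, charpoly_transpose,
      ← mem_spectrum_iff_isRoot_charpoly]
  simpa only [transpose_apply] using
    eigenvalue_mem_ball (Module.End.hasEigenvalue_iff_mem_spectrum.2 hμT)

/-- The right end of the real projection of the `k`-th column Gershgorin disc of `A`. -/
def gershgorinColBound (A : Matrix ι ι ℝ) (k : ι) : ℝ :=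
  A k k + ∑ i ∈ univ.erase k, |A i k|

theorem exists_re_le_gershgorinColBound {A : Matrix ι ι ℝ} {μ : ℂ}
    (hμ : μ ∈ spectrum ℂ (A.map Complex.ofReal)) :
    ∃ k, μ.re ≤ A.gershgorinColBound k := by
  obtain ⟨k, hk⟩ := exists_mem_closedBall_sum_col_of_mem_spectrum hμ
  refine ⟨k, ?_⟩
  rw [mem_closedBall_iff_norm] at hk
  simp only [map_apply, Complex.norm_real, Real.norm_eq_abs] at hk
  calc μ.re = A k k + (μ - A k k).re := by simp
    _ ≤ A k k + ‖μ - A k k‖ := by gcongr; exact Complex.re_le_norm _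
    _ ≤ A.gershgorinColBound k := by unfold gershgorinColBound; linarith

theorem gershgorinColBound_add_le (A B : Matrix ι ι ℝ) (k : ι) :
    (A + B).gershgorinColBound k ≤ A.gershgorinColBound k + B.gershgorinColBound k := by
  have := sum_le_sum fun i (_ : i ∈ univ.erase k) => abs_add_le (A i k) (B i k)
  simp only [gershgorinColBound, add_apply, sum_add_distrib] at this ⊢
  linarith

theorem gershgorinColBound_le_sum_abs (A : Matrix ι ι ℝ) (k : ι) :
    A.gershgorinColBound k ≤ ∑ i, |A i k| := by
  rw [gershgorinColBound, ← add_sum_erase _ _ (mem_univ k)]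
  gcongr
  exact le_abs_self _

theorem gershgorinColBound_eq_sum_of_nonneg {A : Matrix ι ι ℝ} {k : ι} (hkk : A k k = 0)
    (hA : ∀ i, 0 ≤ A i k) : A.gershgorinColBound k = ∑ i, A i k := by
  rw [gershgorinColBound, hkk, zero_add, ← add_sum_erase _ _ (mem_univ k), hkk, zero_add]
  exact sum_congr rfl fun i _ => abs_of_nonneg (hA i)

theorem gershgorinColBound_diagonal (d : ι → ℝ) (k : ι) :
    (diagonal d).gershgorinColBound k = d k := by
  rw [gershgorinColBound, diagonal_apply_eq, add_eq_left]
  exact sum_eq_zero fun i hi => by rw [diagonal_apply_ne _ (ne_of_mem_erase hi), abs_zero]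

end Matrix

open Matrix

section FlocPieces

variable (xbar : ℝ) (n : ℕ)

noncomputable def sinkoRenewal (q : ℝ → ℝ) : Matrix (Fin n) (Fin n) ℝ :=
  of fun i j => if (i : ℕ) = 0 then q (gridX xbar n j) else 0

noncomputable def sinkoTransport (g μ : ℝ → ℝ) : Matrix (Fin n) (Fin n) ℝ :=
  of fun i j =>
    if i = j then -g (gridX xbar n i) / (xbar / n) - μ (gridX xbar n i)
    else if (i : ℕ) = (j : ℕ) + 1 then g (gridX xbar n j) / (xbar / n) else 0

noncomputable def aggLoss (ka : ℝ → ℝ → ℝ) (α : Fin n → ℝ) : Matrix (Fin n) (Fin n) ℝ :=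
  of fun i j =>
    if (i : ℕ) + (j : ℕ) + 2 ≤ n then -(α i) * ka (gridX xbar n i) (gridX xbar n j) * (xbar / n)
    else 0

noncomputable def aggLossRate (ka : ℝ → ℝ → ℝ) (α : Fin n → ℝ) (i : Fin n) : ℝ :=
  ∑ m : Fin n, if (m : ℕ) + (i : ℕ) + 2 ≤ n then
    ka (gridX xbar n i) (gridX xbar n m) * α m * (xbar / n) else 0

noncomputable def aggGain (ka : ℝ → ℝ → ℝ) (α : Fin n → ℝ) : Matrix (Fin n) (Fin n) ℝ :=
  of fun i j =>
    if _h : (j : ℕ) < (i : ℕ) then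
      α ⟨(i : ℕ) - (j : ℕ) - 1, by omega⟩ *
        ka (gridX xbar n j) (gridX xbar n ⟨(i : ℕ) - (j : ℕ) - 1, by omega⟩) * (xbar / n)
    else 0

variable {xbar n}

theorem sinkoG_eq_add (g μ q : ℝ → ℝ) :
    sinkoG xbar n g μ q = sinkoRenewal xbar n q + sinkoTransport xbar n g μ := by
  ext i j
  simp only [sinkoG, sinkoRenewal, sinkoTransport, Matrix.add_apply, of_apply]
  split_ifs <;> subst_vars <;> first | omega | ring

theorem flocJA_eq_add (ka : ℝ → ℝ → ℝ) (α : Fin n → ℝ) :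
    flocJA xbar n ka α =
      aggLoss xbar n ka α + diagonal (-aggLossRate xbar n ka α) + aggGain xbar n ka α := by
  ext i j
  simp only [flocJA, aggLoss, aggLossRate, aggGain, Matrix.add_apply, of_apply, diagonal_apply,
    Pi.neg_apply]

end FlocPieces

theorem Fin.sum_abs_ite_val_eq_le {n : ℕ} (N : ℕ) (c : ℝ) :
    ∑ i : Fin n, |if (i : ℕ) = N then c else 0| ≤ |c| := by
  rcases lt_or_ge N n with hN | hN
  · rw [sum_eq_single ⟨N, hN⟩ (fun i _ hi => by rw [if_neg (Fin.val_ne_of_ne hi), abs_zero])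
      (by simp)]
    simp
  · simp [show ∀ i : Fin n, (i : ℕ) ≠ N from fun i => by omega]

theorem Fin.sum_dite_lt_eq_sum_ite {M : Type*} [AddCommMonoid M] {n : ℕ} (k : Fin n)
    (f : Fin n → M) :
    (∑ i : Fin n, if h : (k : ℕ) < i then f ⟨i - k - 1, by omega⟩ else 0) =
      ∑ m : Fin n, if (m : ℕ) + k + 2 ≤ n then f m else 0 := by
  have lt_of_ne_zero {i : Fin n}
      (hi : (if h : (k : ℕ) < i then f ⟨i - k - 1, by omega⟩ else 0) ≠ 0) : (k : ℕ) < i := by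
    by_contra h
    exact hi (dif_neg h)
  refine sum_bij_ne_zero (fun i _ _ => ⟨i - k - 1, by omega⟩) (fun _ _ _ => mem_univ _) ?_ ?_ ?_
  · intro i₁ _ h₁ i₂ _ h₂ heq
    have := lt_of_ne_zero h₁
    have := lt_of_ne_zero h₂
    ext
    simp only [Fin.mk.injEq] at heq
    omega
  · intro m _ hm
    have hmk : (m : ℕ) + k + 2 ≤ n := by
      by_contra h
      exact hm (if_neg h)
    have hm' : (⟨m + k + 1 - k - 1, by omega⟩ : Fin n) = m := Fin.ext (by simp only; omega)
    refine ⟨⟨m + k + 1, by omega⟩, mem_univ _, ?_, hm'⟩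
    rw [if_pos hmk] at hm
    rwa [dif_pos (by simp), hm']
  · intro i _ hi
    have hki := lt_of_ne_zero hi
    rw [dif_pos hki, if_pos (by simp only; omega)]

section FlocColumnBounds

variable {xbar : ℝ} {n : ℕ} (k : Fin n)

theorem gershgorinColBound_sinkoRenewal_le (q : ℝ → ℝ) :
    (sinkoRenewal xbar n q).gershgorinColBound k ≤ |q (gridX xbar n k)| :=
  (gershgorinColBound_le_sum_abs _ k).trans (Fin.sum_abs_ite_val_eq_le 0 _)

theorem gershgorinColBound_sinkoTransport_le (hxbar : 0 ≤ xbar) {g : ℝ → ℝ} (μ : ℝ → ℝ)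
    (hg : 0 ≤ g (gridX xbar n k)) :
    (sinkoTransport xbar n g μ).gershgorinColBound k ≤ -μ (gridX xbar n k) := by
  set growth := g (gridX xbar n k) / (xbar / n)
  have hgrowth : 0 ≤ growth := by positivity
  have hoff : ∑ i ∈ univ.erase k, |sinkoTransport xbar n g μ i k| ≤ growth :=
    calc ∑ i ∈ univ.erase k, |sinkoTransport xbar n g μ i k|
        = ∑ i ∈ univ.erase k, |if (i : ℕ) = k + 1 then growth else 0| :=
          sum_congr rfl fun i hi => by simp [sinkoTransport, ne_of_mem_erase hi, growth]
      _ ≤ ∑ i : Fin n, |if (i : ℕ) = k + 1 then growth else 0| :=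
          sum_le_univ_sum_of_nonneg fun _ => abs_nonneg _
      _ ≤ growth := (Fin.sum_abs_ite_val_eq_le _ _).trans_eq (abs_of_nonneg hgrowth)
  have hdiag : sinkoTransport xbar n g μ k k = -growth - μ (gridX xbar n k) := by
    simp [sinkoTransport, growth, neg_div]
  rw [gershgorinColBound, hdiag]
  linarith

theorem gershgorinColBound_aggLoss_le (hxbar : 0 ≤ xbar) (ka : ℝ → ℝ → ℝ) {α : Fin n → ℝ}
    (hα : ∀ j, 0 ≤ α j) (hka : ∀ j, 0 ≤ ka (gridX xbar n j) (gridX xbar n k)) :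
    (aggLoss xbar n ka α).gershgorinColBound k ≤
      ∑ j : Fin n, if (j : ℕ) + k + 2 ≤ n then
        α j * ka (gridX xbar n j) (gridX xbar n k) * (xbar / n) else 0 := by
  refine (gershgorinColBound_le_sum_abs _ k).trans_eq (sum_congr rfl fun j _ => ?_)
  simp only [aggLoss, of_apply]
  split_ifs
  · rw [neg_mul, neg_mul, abs_neg, abs_of_nonneg (by have := hα j; have := hka j; positivity)]
  · exact abs_zero

theorem gershgorinColBound_aggGain (hxbar : 0 ≤ xbar) (ka : ℝ → ℝ → ℝ) {α : Fin n → ℝ}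
    (hα : ∀ j, 0 ≤ α j) (hka : ∀ j, 0 ≤ ka (gridX xbar n k) (gridX xbar n j)) :
    (aggGain xbar n ka α).gershgorinColBound k = aggLossRate xbar n ka α k := by
  rw [gershgorinColBound_eq_sum_of_nonneg (by simp [aggGain]) fun i => ?_]
  · simp only [aggGain, of_apply, aggLossRate]
    rw [Fin.sum_dite_lt_eq_sum_ite k
      fun m => α m * ka (gridX xbar n k) (gridX xbar n m) * (xbar / n)]
    exact sum_congr rfl fun m _ => by rw [mul_comm (α m)]
  · simp only [aggGain, of_apply]
    split_ifs
    · have := hα ⟨i - k - 1, by omega⟩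
      have := hka ⟨i - k - 1, by omega⟩
      positivity
    · exact le_rfl

theorem gershgorinColBound_flocJB (hxbar : 0 ≤ xbar) {kf : ℝ → ℝ} {Γ : ℝ → ℝ → ℝ}
    (hkf : 0 ≤ kf (gridX xbar n k)) (hΓ : ∀ j, 0 ≤ Γ (gridX xbar n j) (gridX xbar n k)) :
    (flocJB xbar n kf Γ).gershgorinColBound k =
      -kf (gridX xbar n k) / 2 + ∑ j : Fin n, if (j : ℕ) < k then
        Γ (gridX xbar n j) (gridX xbar n k) * kf (gridX xbar n k) * (xbar / n) else 0 := by
  have hoff : ∀ i ∈ univ.erase k, |flocJB xbar n kf Γ i k| = if (i : ℕ) < k then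
      Γ (gridX xbar n i) (gridX xbar n k) * kf (gridX xbar n k) * (xbar / n) else 0 := by
    intro i hi
    simp only [flocJB, if_neg (ne_of_mem_erase hi)]
    split_ifs
    · exact abs_of_nonneg (by have := hΓ i; positivity)
    · exact abs_zero
  rw [gershgorinColBound, sum_congr rfl hoff, ← sum_erase_add _ _ (mem_univ k),
    if_neg (lt_irrefl _), add_zero]
  simp [flocJB, neg_div]

end FlocColumnBounds

theorem gershgorinColBound_flocJF_le {xbar : ℝ} (hxbar : 0 ≤ xbar) {n : ℕ} (k : Fin n)
    {g μ q kf : ℝ → ℝ} {ka Γ : ℝ → ℝ → ℝ} {α : Fin n → ℝ} (hα : ∀ j, 0 ≤ α j)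
    (hg : 0 ≤ g (gridX xbar n k)) (hq : 0 ≤ q (gridX xbar n k))
    (hkf : 0 ≤ kf (gridX xbar n k))
    (hka_col : ∀ j, 0 ≤ ka (gridX xbar n j) (gridX xbar n k))
    (hka_row : ∀ j, 0 ≤ ka (gridX xbar n k) (gridX xbar n j))
    (hΓ : ∀ j, 0 ≤ Γ (gridX xbar n j) (gridX xbar n k)) :
    (flocJF xbar n g μ q kf ka Γ α).gershgorinColBound k ≤
      q (gridX xbar n k)
        + (∑ j : Fin n, if (j : ℕ) < k then
            Γ (gridX xbar n j) (gridX xbar n k) * kf (gridX xbar n k) * (xbar / n) else 0)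
        + (∑ j : Fin n, if (j : ℕ) + k + 2 ≤ n then
            α j * ka (gridX xbar n j) (gridX xbar n k) * (xbar / n) else 0)
        - (μ (gridX xbar n k) + kf (gridX xbar n k) / 2) := by
  rw [flocJF, sinkoG_eq_add, flocJA_eq_add]
  set R := sinkoRenewal xbar n q
  set T := sinkoTransport xbar n g μ
  set L := aggLoss xbar n ka α
  set D := diagonal (-aggLossRate xbar n ka α)
  set A := aggGain xbar n ka α
  set B := flocJB xbar n kf Γ
  have hsplit := gershgorinColBound_add_le (R + T + (L + D + A)) B k
  have hG := gershgorinColBound_add_le (R + T) (L + D + A) k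
  have hRT := gershgorinColBound_add_le R T k
  have hLDA := gershgorinColBound_add_le (L + D) A k
  have hLD := gershgorinColBound_add_le L D k
  have hR := gershgorinColBound_sinkoRenewal_le (xbar := xbar) k q
  rw [abs_of_nonneg hq] at hR
  have hD : D.gershgorinColBound k = -aggLossRate xbar n ka α k := gershgorinColBound_diagonal _ k
  linarith [gershgorinColBound_sinkoTransport_le k hxbar μ hg,
    gershgorinColBound_aggLoss_le k hxbar ka hα hka_col,
    gershgorinColBound_aggGain k hxbar ka hα hka_row,
    gershgorinColBound_flocJB k hxbar hkf hΓ]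

theorem flocJF_eigenvalues_negative_general
    (xbar : ℝ) (hxbar : 0 < xbar) (n : ℕ)
    (g μ q kf : ℝ → ℝ) (ka : ℝ → ℝ → ℝ) (Γ : ℝ → ℝ → ℝ) (α : Fin n → ℝ)
    (hα : ∀ i : Fin n, 0 ≤ α i)
    (hg : ∀ i : Fin n, 0 ≤ g (gridX xbar n i))
    (hq : ∀ i : Fin n, 0 ≤ q (gridX xbar n i))
    (hkf : ∀ i : Fin n, 0 ≤ kf (gridX xbar n i))
    (hka : ∀ i j : Fin n, 0 ≤ ka (gridX xbar n i) (gridX xbar n j))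
    (hΓ : ∀ i j : Fin n, 0 ≤ Γ (gridX xbar n i) (gridX xbar n j))
    (hdom : ∀ i : Fin n,
      q (gridX xbar n i)
        + (∑ j : Fin n, if (j : ℕ) < (i : ℕ) then
            Γ (gridX xbar n j) (gridX xbar n i) * kf (gridX xbar n i) * (xbar / n)
          else 0)
        + (∑ j : Fin n, if (j : ℕ) + (i : ℕ) + 2 ≤ n then
            α j * ka (gridX xbar n j) (gridX xbar n i) * (xbar / n) else 0)
      < μ (gridX xbar n i) + kf (gridX xbar n i) / 2)
    (lam : ℂ)
    (hlam : lam ∈ spectrum ℂ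
      ((flocJF xbar n g μ q kf ka Γ α).map Complex.ofReal)) :
    lam.re < 0 := by
  obtain ⟨k, hk⟩ := exists_re_le_gershgorinColBound hlam
  have hcol := gershgorinColBound_flocJF_le hxbar.le k (μ := μ) hα (hg k) (hq k) (hkf k)
    (hka · k) (hka k) (hΓ · k)
  linarith [hdom k]

/-- Proposition 2 (finite-dimensional content): under the diagonal-dominance
condition
`μ(x_i) + k_f(x_i)/2 > q(x_i) + Σ_{j<i} Γ(x_j,x_i)k_f(x_i)Δx + Σ_{j=1}^{n−i} α_j k_a(x_j,x_i)Δx`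
at every grid point, every complex eigenvalue of the approximate Jacobian `J_F(α)`
has strictly negative real part. -/
theorem flocJF_eigenvalues_negative
    (xbar : ℝ) (hxbar : 0 < xbar) (n : ℕ) (hn : 1 ≤ n)
    (g μ q kf : ℝ → ℝ) (ka : ℝ → ℝ → ℝ) (Γ : ℝ → ℝ → ℝ) (α : Fin n → ℝ)
    (hα : ∀ i : Fin n, 0 ≤ α i)
    (hg : ∀ i : Fin n, 0 ≤ g (gridX xbar n i))
    (hq : ∀ i : Fin n, 0 ≤ q (gridX xbar n i))
    (hkf : ∀ i : Fin n, 0 ≤ kf (gridX xbar n i))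
    (hka : ∀ i j : Fin n, 0 ≤ ka (gridX xbar n i) (gridX xbar n j))
    (hΓ : ∀ i j : Fin n, 0 ≤ Γ (gridX xbar n i) (gridX xbar n j))
    (hdom : ∀ i : Fin n,
      q (gridX xbar n i)
        + (∑ j : Fin n, if (j : ℕ) < (i : ℕ) then
            Γ (gridX xbar n j) (gridX xbar n i) * kf (gridX xbar n i) * (xbar / n)
          else 0)
        + (∑ j : Fin n, if (j : ℕ) + (i : ℕ) + 2 ≤ n then
            α j * ka (gridX xbar n j) (gridX xbar n i) * (xbar / n) else 0)
      < μ (gridX xbar n i) + kf (gridX xbar n i) / 2)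
    (lam : ℂ)
    (hlam : lam ∈ spectrum ℂ
      ((flocJF xbar n g μ q kf ka Γ α).map Complex.ofReal)) :
    lam.re < 0 :=
  flocJF_eigenvalues_negative_general xbar hxbar n g μ q kf ka Γ α hα hg hq hkf hka hΓ hdom lam hlam
end

section
/- Let x̄ > 0 and let u_* : ℝ → ℝ, k_f, q, μ : ℝ → ℝ, k_a : ℝ × ℝ → ℝ, Γ : ℝ × ℝ → ℝ be functions such that u_* is nonnegative on [0, x̄], k_f, Γ, and k_a are nonnegative on the relevant ranges, and k_a is symmetric (k_a(x, y) = k_a(y, x) for all x, y). Suppose that for every x ∈ [0, x̄]: the map y ↦ Γ(y, x) is antitone and integrable on [0, x]; the map y ↦ k_a(x, y)·u_*(y) is antitone and integrable on [0, x̄ − x]; and the strict inequality μ(x) + k_f(x)/2 > q(x) + k_f(x)·∫_0^x Γ(y, x) dy + ∫_0^{x̄−x} k_a(x, y)·u_*(y) dy holds. Then for every integer n ≥ 1, setting Δx = x̄/n, x_i = i·Δx, and α_j = u_*(x_j), the discrete inequality μ(x_i) + k_f(x_i)/2 > q(x_i) + Σ_{j=1}^{i−1} Γ(x_j, x_i)·k_f(x_i)·Δx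 + Σ_{j=1}^{n−i} α_j·k_a(x_j, x_i)·Δx holds for every i ∈ {1, …, n}. -/
/-!
Over each grid cell `[jΔ, (j+1)Δ]` an antitone integrand is at least its value at the right
endpoint, so right Riemann sums of antitone functions are bounded by their integrals. The
second sum is exactly such a Riemann sum over `[0, x̄ - x_i]`; the first covers only
`[0, x_i - Δ]`, and the remaining cell contributes a nonnegative integral since `Γ ≥ 0`.
Both discrete sums are therefore dominated by the integrals in the continuous inequality.
-/

open MeasureTheory Set

theorem AntitoneOn.sum_mul_le_integral {f : ℝ → ℝ} {δ : ℝ} (hδ : 0 < δ) {m : ℕ}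
    (hf : AntitoneOn f (Icc 0 (m * δ))) :
    ∑ j ∈ Finset.range m, f ((j + 1) * δ) * δ ≤ ∫ y in 0..m * δ, f y := by
  have hscaled : AntitoneOn (fun t => f (t * δ)) (Icc 0 (0 + m)) := fun a ha b hb hab =>
    hf ⟨by nlinarith [ha.1], by nlinarith [ha.2]⟩ ⟨by nlinarith [hb.1], by nlinarith [hb.2]⟩
      (by nlinarith)
  have key := hscaled.sum_le_integral
  rw [intervalIntegral.integral_comp_mul_right f hδ.ne', smul_eq_mul] at key
  push_cast at key
  simp only [zero_add, zero_mul] at key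
  rw [← Finset.sum_mul]
  calc _ ≤ (δ⁻¹ * ∫ y in 0..m * δ, f y) * δ := by gcongr
    _ = _ := by field_simp

theorem AntitoneOn.sum_mul_le_integral_of_le {f : ℝ → ℝ} {δ b : ℝ} (hδ : 0 < δ) {m : ℕ}
    (hf : AntitoneOn f (Icc 0 b)) (hmb : m * δ ≤ b) (hnn : ∀ y ∈ Icc (m * δ) b, 0 ≤ f y) :
    ∑ j ∈ Finset.range m, f ((j + 1) * δ) * δ ≤ ∫ y in 0..b, f y := by
  have hf_int : ∀ c d, Icc c d ⊆ Icc 0 b → c ≤ d → IntervalIntegrable f volume c d :=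
    fun c d hcd hle => AntitoneOn.intervalIntegrable ((uIcc_of_le hle).symm ▸ hf.mono hcd)
  rw [← intervalIntegral.integral_add_adjacent_intervals
    (hf_int _ _ (Icc_subset_Icc le_rfl hmb) (by positivity))
    (hf_int _ _ (Icc_subset_Icc (by positivity) le_rfl) hmb)]
  exact le_add_of_le_of_nonneg ((hf.mono (Icc_subset_Icc le_rfl hmb)).sum_mul_le_integral hδ)
    (intervalIntegral.integral_nonneg hmb hnn)

theorem Fin.sum_ite_val_lt {M : Type*} [AddCommMonoid M] {m n : ℕ} (hmn : m ≤ n)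
    (g : ℕ → M) :
    ∑ j : Fin n, (if (j : ℕ) < m then g j else 0) = ∑ k ∈ Finset.range m, g k := by
  rw [Fin.sum_univ_eq_sum_range (fun k => if k < m then g k else 0), ← Finset.sum_filter]
  congr 1
  ext k
  simp only [Finset.mem_filter, Finset.mem_range]
  omega

section gridX

variable {xbar : ℝ} {n : ℕ}

theorem gridX_mem_Icc (hxbar : 0 ≤ xbar) (i : Fin n) : gridX xbar n i ∈ Icc 0 xbar := by
  have hn : (0 : ℝ) < n := by exact_mod_cast i.pos
  have hi : ((i : ℕ) : ℝ) + 1 ≤ n := by exact_mod_cast i.isLt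
  refine ⟨by unfold gridX; positivity, ?_⟩
  calc gridX xbar n i ≤ n * (xbar / n) := by unfold gridX; gcongr
    _ = xbar := by field_simp

theorem sub_gridX_eq (i : Fin n) :
    xbar - gridX xbar n i = ((n - ((i : ℕ) + 1) : ℕ) : ℝ) * (xbar / n) := by
  have hn : (n : ℝ) ≠ 0 := by exact_mod_cast i.pos.ne'
  rw [Nat.cast_sub i.isLt]
  unfold gridX
  field_simp
  push_cast
  ring

theorem sum_ite_lt_gridX_le_integral (hxbar : 0 < xbar) (i : Fin n) {f : ℝ → ℝ}
    (hf : AntitoneOn f (Icc 0 (gridX xbar n i)))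
    (hnn : ∀ y ∈ Icc 0 (gridX xbar n i), 0 ≤ f y) :
    ∑ j : Fin n, (if (j : ℕ) < i then f (gridX xbar n j) * (xbar / n) else 0)
      ≤ ∫ y in 0..gridX xbar n i, f y := by
  have hΔ : 0 < xbar / n := div_pos hxbar (by exact_mod_cast i.pos)
  have hi : (i : ℕ) * (xbar / n) ≤ gridX xbar n i := by unfold gridX; gcongr; linarith
  calc _ = ∑ k ∈ Finset.range i, f ((k + 1) * (xbar / n)) * (xbar / n) :=
        Fin.sum_ite_val_lt i.isLt.le _
    _ ≤ _ := hf.sum_mul_le_integral_of_le hΔ hi fun y hy =>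
        hnn y ⟨hy.1.trans' (by positivity), hy.2⟩

theorem sum_ite_add_gridX_le_integral (hxbar : 0 < xbar) (i : Fin n) {f : ℝ → ℝ}
    (hf : AntitoneOn f (Icc 0 (xbar - gridX xbar n i))) :
    ∑ j : Fin n, (if (j : ℕ) + i + 2 ≤ n then f (gridX xbar n j) * (xbar / n) else 0)
      ≤ ∫ y in 0..xbar - gridX xbar n i, f y := by
  have hΔ : 0 < xbar / n := div_pos hxbar (by exact_mod_cast i.pos)
  rw [sub_gridX_eq] at hf ⊢
  calc _ = ∑ j : Fin n,
        (if (j : ℕ) < n - ((i : ℕ) + 1) then f (gridX xbar n j) * (xbar / n) else 0) :=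
        Finset.sum_congr rfl fun j _ => if_congr (by omega) rfl rfl
    _ = ∑ k ∈ Finset.range (n - ((i : ℕ) + 1)), f ((k + 1) * (xbar / n)) * (xbar / n) :=
        Fin.sum_ite_val_lt (Nat.sub_le _ _) fun k => f ((k + 1) * (xbar / n)) * (xbar / n)
    _ ≤ _ := hf.sum_mul_le_integral hΔ

end gridX

theorem continuous_implies_discrete_dominance_general
    (xbar : ℝ) (hxbar : 0 < xbar)
    (u μ q kf : ℝ → ℝ) (ka : ℝ → ℝ → ℝ) (Γ : ℝ → ℝ → ℝ)
    (hkf : ∀ x ∈ Set.Icc (0:ℝ) xbar, 0 ≤ kf x)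
    (hΓnn : ∀ x ∈ Set.Icc (0:ℝ) xbar, ∀ y ∈ Set.Icc (0:ℝ) xbar, 0 ≤ Γ x y)
    (hsym : ∀ x y : ℝ, ka x y = ka y x)
    (hΓanti : ∀ x ∈ Set.Icc (0:ℝ) xbar, AntitoneOn (fun y => Γ y x) (Set.Icc 0 x))
    (hkaanti : ∀ x ∈ Set.Icc (0:ℝ) xbar,
      AntitoneOn (fun y => ka x y * u y) (Set.Icc 0 (xbar - x)))
    (hineq : ∀ x ∈ Set.Icc (0:ℝ) xbar,
      q x + kf x * (∫ y in (0:ℝ)..x, Γ y x)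
        + (∫ y in (0:ℝ)..(xbar - x), ka x y * u y)
      < μ x + kf x / 2) :
    ∀ n : ℕ, 1 ≤ n → ∀ i : Fin n,
      q (gridX xbar n i)
        + (∑ j : Fin n, if (j : ℕ) < (i : ℕ) then
            Γ (gridX xbar n j) (gridX xbar n i) * kf (gridX xbar n i) * (xbar / n)
          else 0)
        + (∑ j : Fin n, if (j : ℕ) + (i : ℕ) + 2 ≤ n then
            u (gridX xbar n j) * ka (gridX xbar n j) (gridX xbar n i) * (xbar / n)
          else 0)
      < μ (gridX xbar n i) + kf (gridX xbar n i) / 2 := by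
  intro n _ i
  set x := gridX xbar n i
  have hx : x ∈ Icc 0 xbar := gridX_mem_Icc hxbar.le i
  have hΓsum : (∑ j : Fin n, if (j : ℕ) < (i : ℕ) then
      Γ (gridX xbar n j) x * kf x * (xbar / n) else 0) ≤ kf x * ∫ y in 0..x, Γ y x := by
    calc _ = kf x * ∑ j : Fin n,
          (if (j : ℕ) < i then Γ (gridX xbar n j) x * (xbar / n) else 0) := by
          rw [Finset.mul_sum]; exact Finset.sum_congr rfl fun j _ => by split_ifs <;> ring
      _ ≤ _ := mul_le_mul_of_nonneg_left (sum_ite_lt_gridX_le_integral hxbar i (hΓanti x hx)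
          fun y hy => hΓnn y ⟨hy.1, hy.2.trans hx.2⟩ x hx) (hkf x hx)
  have hkasum : (∑ j : Fin n, if (j : ℕ) + (i : ℕ) + 2 ≤ n then
      u (gridX xbar n j) * ka (gridX xbar n j) x * (xbar / n) else 0)
      ≤ ∫ y in 0..xbar - x, ka x y * u y := by
    simp only [hsym _ x, mul_comm (u _)]
    exact sum_ite_add_gridX_le_integral hxbar i (hkaanti x hx)
  linarith [hineq x hx]

/-- Riemann-sum comparison step of Proposition 2: if the integrands are antitone and
nonnegative and the continuous stability inequality
`μ(x) + k_f(x)/2 > q(x) + k_f(x)·∫_0^x Γ(y,x) dy + ∫_0^{x̄−x} k_a(x,y)u_*(y) dy`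
holds for every `x ∈ [0, x̄]`, then the discrete diagonal-dominance inequality holds
at every grid point, for every discretization level `n`. -/
theorem continuous_implies_discrete_dominance
    (xbar : ℝ) (hxbar : 0 < xbar)
    (u μ q kf : ℝ → ℝ) (ka : ℝ → ℝ → ℝ) (Γ : ℝ → ℝ → ℝ)
    (hu : ∀ x ∈ Set.Icc (0:ℝ) xbar, 0 ≤ u x)
    (hkf : ∀ x ∈ Set.Icc (0:ℝ) xbar, 0 ≤ kf x)
    (hΓnn : ∀ x ∈ Set.Icc (0:ℝ) xbar, ∀ y ∈ Set.Icc (0:ℝ) xbar, 0 ≤ Γ x y)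
    (hkann : ∀ x ∈ Set.Icc (0:ℝ) xbar, ∀ y ∈ Set.Icc (0:ℝ) xbar, 0 ≤ ka x y)
    (hsym : ∀ x y : ℝ, ka x y = ka y x)
    (hΓanti : ∀ x ∈ Set.Icc (0:ℝ) xbar, AntitoneOn (fun y => Γ y x) (Set.Icc 0 x))
    (hΓint : ∀ x ∈ Set.Icc (0:ℝ) xbar,
      IntervalIntegrable (fun y => Γ y x) volume 0 x)
    (hkaanti : ∀ x ∈ Set.Icc (0:ℝ) xbar,
      AntitoneOn (fun y => ka x y * u y) (Set.Icc 0 (xbar - x)))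
    (hkaint : ∀ x ∈ Set.Icc (0:ℝ) xbar,
      IntervalIntegrable (fun y => ka x y * u y) volume 0 (xbar - x))
    (hineq : ∀ x ∈ Set.Icc (0:ℝ) xbar,
      q x + kf x * (∫ y in (0:ℝ)..x, Γ y x)
        + (∫ y in (0:ℝ)..(xbar - x), ka x y * u y)
      < μ x + kf x / 2) :
    ∀ n : ℕ, 1 ≤ n → ∀ i : Fin n,
      q (gridX xbar n i)
        + (∑ j : Fin n, if (j : ℕ) < (i : ℕ) then
            Γ (gridX xbar n j) (gridX xbar n i) * kf (gridX xbar n i) * (xbar / n)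
          else 0)
        + (∑ j : Fin n, if (j : ℕ) + (i : ℕ) + 2 ≤ n then
            u (gridX xbar n j) * ka (gridX xbar n j) (gridX xbar n i) * (xbar / n)
          else 0)
      < μ (gridX xbar n i) + kf (gridX xbar n i) / 2 :=
  continuous_implies_discrete_dominance_general xbar hxbar u μ q kf ka Γ hkf hΓnn hsym hΓanti
    hkaanti hineq
end

section
/- Assume k_a is symmetric: k_a(x, y) = k_a(y, x) for all x, y ∈ ℝ. Then the map F_n : ℝ^n → ℝ^n is differentiable, and for every α ∈ ℝ^n its Fréchet derivative at α is the linear map ℝ^n → ℝ^n given by the matrix J_F(α) = G_n + J_A(α) + J_B. -/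
open scoped BigOperators

/-- The discretized population balance (microbial flocculation) operator
`F_n : ℝ^n → ℝ^n` (eqs. (19)–(20)): in 1-based notation,
`(F_n(α))_i = (G_n α)_i + (1/2)Σ_{j=1}^{i−1} k_a(x_j,x_{i−j})α_j α_{i−j} Δx
  − α_i Σ_{j=1}^{n−i} k_a(x_i,x_j)α_j Δx + Σ_{j=i+1}^{n} Γ(x_i,x_j)k_f(x_j)α_j Δx
  − (1/2)k_f(x_i)α_i`. -/
noncomputable def flocF (xbar : ℝ) (n : ℕ) (g μ q kf : ℝ → ℝ)
    (ka : ℝ → ℝ → ℝ) (Γ : ℝ → ℝ → ℝ) (α : Fin n → ℝ) : Fin n → ℝ :=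
  fun i =>
    let Δx := xbar / n
    let x := gridX xbar n
    (sinkoG xbar n g μ q).mulVec α i
    + (1 / 2) * (∑ j : Fin n, if _h : (j : ℕ) < (i : ℕ) then
        ka (x j)
            (x ⟨(i : ℕ) - (j : ℕ) - 1,
              Nat.lt_of_le_of_lt ((Nat.sub_le _ _).trans (Nat.sub_le _ _)) i.isLt⟩)
          * α j
          * α ⟨(i : ℕ) - (j : ℕ) - 1,
              Nat.lt_of_le_of_lt ((Nat.sub_le _ _).trans (Nat.sub_le _ _)) i.isLt⟩
          * Δx
      else 0)
    - α i * (∑ j : Fin n, if (j : ℕ) + (i : ℕ) + 2 ≤ n then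
        ka (x i) (x j) * α j * Δx else 0)
    + (∑ j : Fin n, if (i : ℕ) < (j : ℕ) then
        Γ (x i) (x j) * kf (x j) * α j * Δx else 0)
    - (1 / 2) * kf (x i) * α i

/-! Each component of `F_n` is a quadratic polynomial in `α`: the linear part `(G_n + J_B) α` plus
a quadratic form `Σ_{j,k} c_{ijk} α_j α_k` collecting the aggregation births and deaths. Such a map
has derivative `h ↦ (Σ_k (c_{ijk} + c_{ikj}) α_k)_{ij} h`, and this matrix is `J_A(α)` once `k_a`
is symmetric: the birth coefficient `c_{i,j,i-j}` and its mirror `c_{i,i-j,j}` then add up to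
`k_a(x_j, x_{i-j}) Δx`. -/

theorem hasFDerivAt_sum_sum_mul_mul {𝕜 ι : Type*} [NontriviallyNormedField 𝕜] [CompleteSpace 𝕜]
    [Fintype ι] (c : ι → ι → ι → 𝕜) (α : ι → 𝕜) :
    HasFDerivAt (fun a i => ∑ j, ∑ k, c i j k * (a j * a k))
      (Matrix.mulVecLin (Matrix.of fun i j => ∑ k, (c i j k + c i k j) * α k)).toContinuousLinearMap
      α := by
  rw [hasFDerivAt_pi']
  intro i
  refine (HasFDerivAt.fun_sum fun j _ => HasFDerivAt.fun_sum fun k _ =>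
    ((hasFDerivAt_apply j α).mul (hasFDerivAt_apply k α)).const_mul (c i j k)).congr_fderiv ?_
  ext v
  simp only [ContinuousLinearMap.coe_comp, Function.comp_apply,
    LinearMap.coe_toContinuousLinearMap', FunLike.coe_sum, Finset.sum_apply,
    FunLike.coe_add, Pi.add_apply, FunLike.coe_smul, Pi.smul_apply,
    ContinuousLinearMap.proj_apply, smul_eq_mul,
    Matrix.mulVecLin_apply, Matrix.mulVec, dotProduct, Matrix.of_apply, mul_add, add_mul,
    Finset.sum_add_distrib, Finset.sum_mul]
  rw [Finset.sum_comm (f := fun j k => c i j k * (α j * v k)), add_comm]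
  congr 1 <;> exact Finset.sum_congr rfl fun _ _ => Finset.sum_congr rfl fun _ _ => by ring

/-- The 0-based index of the grid point `x_i - x_j`; junk (truncated subtraction) unless
`j < i`. -/
def gridSub {n : ℕ} (i j : Fin n) : Fin n :=
  ⟨(i : ℕ) - (j : ℕ) - 1, Nat.lt_of_le_of_lt ((Nat.sub_le _ _).trans (Nat.sub_le _ _)) i.isLt⟩

theorem lt_and_eq_gridSub_comm {n : ℕ} {i j k : Fin n} :
    (k : ℕ) < i ∧ j = gridSub i k ↔ (j : ℕ) < i ∧ k = gridSub i j := by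
  simp only [gridSub, Fin.ext_iff]
  omega

section Flocculation

open scoped Matrix

variable (xbar : ℝ) (n : ℕ) (ka : ℝ → ℝ → ℝ)

local notation "x" => gridX xbar n

/-- `Σ_{j,k} c_{ijk} α_j α_k` is the aggregation part of `(F_n(α))_i`; the first summand carries
the births, the second the deaths. -/
noncomputable def flocAggCoeff (i j k : Fin n) : ℝ :=
  (if (j : ℕ) < i ∧ k = gridSub i j then ka (x j) (x k) * (xbar / n) / 2 else 0)
  + (if j = i ∧ (k : ℕ) + i + 2 ≤ n then -(ka (x i) (x k) * (xbar / n)) else 0)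

theorem sum_flocAggCoeff_mul (i j : Fin n) (a : Fin n → ℝ) :
    ∑ k, flocAggCoeff xbar n ka i j k * a k =
      (if (j : ℕ) < i then ka (x j) (x (gridSub i j)) * (xbar / n) / 2 * a (gridSub i j) else 0)
      + (if j = i then
          -∑ m : Fin n, if (m : ℕ) + i + 2 ≤ n then ka (x i) (x m) * a m * (xbar / n) else 0
        else 0) := by
  simp only [flocAggCoeff, add_mul, ite_mul, zero_mul, Finset.sum_add_distrib, ite_and]
  congr 1
  · split_ifs <;> simp [Finset.sum_ite_eq']
  · split_ifs
    · rw [← Finset.sum_neg_distrib]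
      exact Finset.sum_congr rfl fun m _ => by split_ifs <;> ring
    · simp

theorem sum_flocAggCoeff_swap_mul (i j : Fin n) (a : Fin n → ℝ) :
    ∑ k, flocAggCoeff xbar n ka i k j * a k =
      (if (j : ℕ) < i then ka (x (gridSub i j)) (x j) * (xbar / n) / 2 * a (gridSub i j) else 0)
      + (if (j : ℕ) + i + 2 ≤ n then -(ka (x i) (x j) * (xbar / n)) * a i else 0) := by
  simp only [flocAggCoeff, lt_and_eq_gridSub_comm, add_mul, ite_mul, zero_mul,
    Finset.sum_add_distrib, ite_and]
  congr 1
  · split_ifs <;> simp [Finset.sum_ite_eq']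
  · simp

theorem sum_sum_flocAggCoeff_mul_mul (i : Fin n) (a : Fin n → ℝ) :
    ∑ j, ∑ k, flocAggCoeff xbar n ka i j k * (a j * a k) =
      1 / 2 * (∑ j : Fin n, if (j : ℕ) < i then
          ka (x j) (x (gridSub i j)) * a j * a (gridSub i j) * (xbar / n) else 0)
      - a i * ∑ j : Fin n, if (j : ℕ) + i + 2 ≤ n then ka (x i) (x j) * a j * (xbar / n) else 0 := by
  have hrow : ∀ j, ∑ k, flocAggCoeff xbar n ka i j k * (a j * a k) =
      a j * ∑ k, flocAggCoeff xbar n ka i j k * a k := fun j => by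
    rw [Finset.mul_sum]
    exact Finset.sum_congr rfl fun k _ => by ring
  simp only [hrow, sum_flocAggCoeff_mul, mul_add, mul_ite, mul_zero, Finset.sum_add_distrib,
    Finset.sum_ite_eq', Finset.mem_univ, if_true]
  rw [mul_neg, sub_eq_add_neg, Finset.mul_sum, Finset.mul_sum]
  congr 1
  exact Finset.sum_congr rfl fun j _ => by split_ifs <;> ring

theorem flocJB_mulVec_apply (kf : ℝ → ℝ) (Γ : ℝ → ℝ → ℝ) (a : Fin n → ℝ) (i : Fin n) :
    (flocJB xbar n kf Γ *ᵥ a) i =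
      (∑ j : Fin n, if (i : ℕ) < j then Γ (x i) (x j) * kf (x j) * a j * (xbar / n) else 0)
      - 1 / 2 * kf (x i) * a i := by
  have hterm : ∀ j, flocJB xbar n kf Γ i j * a j =
      (if i = j then -(kf (x i)) / 2 * a i else 0)
      + (if (i : ℕ) < j then Γ (x i) (x j) * kf (x j) * a j * (xbar / n) else 0) := by
    intro j
    rcases eq_or_ne i j with rfl | hij
    · simp [flocJB]
    · simp only [flocJB, hij, if_false, Fin.val_fin_lt, ite_mul, zero_mul, zero_add]
      split_ifs <;> ring
  simp only [Matrix.mulVec, dotProduct, hterm, Finset.sum_add_distrib, Finset.sum_ite_eq,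
    Finset.mem_univ, if_true]
  ring

theorem flocF_eq (g μ q kf : ℝ → ℝ) (Γ : ℝ → ℝ → ℝ) :
    flocF xbar n g μ q kf ka Γ = fun a =>
      (fun i => ∑ j, ∑ k, flocAggCoeff xbar n ka i j k * (a j * a k))
      + (sinkoG xbar n g μ q + flocJB xbar n kf Γ) *ᵥ a := by
  funext a i
  simp only [Pi.add_apply, Matrix.add_mulVec, flocJB_mulVec_apply, sum_sum_flocAggCoeff_mul_mul]
  simp only [flocF, gridSub, dite_eq_ite]
  ring

theorem flocJA_eq (hsym : ∀ y z, ka y z = ka z y) (α : Fin n → ℝ) :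
    flocJA xbar n ka α =
      Matrix.of fun i j =>
        ∑ k, (flocAggCoeff xbar n ka i j k + flocAggCoeff xbar n ka i k j) * α k := by
  ext i j
  simp only [Matrix.of_apply, add_mul, Finset.sum_add_distrib, sum_flocAggCoeff_mul,
    sum_flocAggCoeff_swap_mul, hsym (x (gridSub i j)) (x j)]
  simp only [flocJA, gridSub, dite_eq_ite, add_comm (j : ℕ) i]
  rcases eq_or_ne i j with rfl | hij
  · simp only [neg_mul, if_true, lt_self_iff_false]
    split_ifs <;> ring
  · simp only [neg_mul, hij, hij.symm, if_false, add_zero, Fin.val_fin_lt]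
    split_ifs <;> ring

end Flocculation

theorem flocF_hasFDerivAt_general
    (xbar : ℝ) (n : ℕ)
    (g μ q kf : ℝ → ℝ) (ka : ℝ → ℝ → ℝ) (Γ : ℝ → ℝ → ℝ)
    (hsym : ∀ x y : ℝ, ka x y = ka y x) :
    ∀ α : Fin n → ℝ,
      HasFDerivAt (flocF xbar n g μ q kf ka Γ)
        (LinearMap.toContinuousLinearMap
          (flocJF xbar n g μ q kf ka Γ α).mulVecLin) α := by
  intro α
  have hJF : flocJF xbar n g μ q kf ka Γ α =
      flocJA xbar n ka α + (sinkoG xbar n g μ q + flocJB xbar n kf Γ) := by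
    rw [flocJF]; abel
  rw [flocF_eq, hJF, flocJA_eq xbar n ka hsym, Matrix.mulVecLin_add, map_add]
  exact (hasFDerivAt_sum_sum_mul_mul _ α).add
    (sinkoG xbar n g μ q + flocJB xbar n kf Γ).mulVecLin.toContinuousLinearMap.hasFDerivAt

/-- If the aggregation kernel is symmetric, then the discretized population balance
operator `F_n` is differentiable, and its Fréchet derivative at every `α ∈ ℝ^n` is
the linear map given by the matrix `J_F(α) = G_n + J_A(α) + J_B`. -/
theorem flocF_hasFDerivAt
    (xbar : ℝ) (hxbar : 0 < xbar) (n : ℕ) (hn : 1 ≤ n)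
    (g μ q kf : ℝ → ℝ) (ka : ℝ → ℝ → ℝ) (Γ : ℝ → ℝ → ℝ)
    (hsym : ∀ x y : ℝ, ka x y = ka y x) :
    ∀ α : Fin n → ℝ,
      HasFDerivAt (flocF xbar n g μ q kf ka Γ)
        (LinearMap.toContinuousLinearMap
          (flocJF xbar n g μ q kf ka Γ α).mulVecLin) α :=
  flocF_hasFDerivAt_general xbar n g μ q kf ka Γ hsym
end
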